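/- arXiv:2410.23078 — 12 statements merged into one kernel-verified Lean document; each statement's English description precedes it below -/
import Mathlib

section
/- Let m and n be positive integers and let d = gcd(m, n). If a prime p divides m/d or divides n/d, then p lies in the ideal of ℤ[X] generated by the cyclotomic polynomials Φ_m(X) and Φ_n(X); equivalently, p = 0 in the quotient ring ℤ[X]/(Φ_m(X), Φ_n(X)). -/
open Polynomial

/-! If `d = gcd(m, n)` and `m = q p` with `d ∣ q` and `p ≠ 1`, then `X^q = 1` modulo
`(Φ_m, Φ_n)`, because `X^m = X^n = 1` there. On the other hand `Φ_m` divides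
`(X^m - 1)/(X^q - 1) = ∑_{i<p} X^{qi}`, which becomes `p` once `X^q = 1`. -/

theorem cyclotomic_mul_dvd_geom_sum_X_pow (R : Type*) [CommRing R] {q k : ℕ} (hk : k ≠ 1) :
    cyclotomic (q * k) R ∣ ∑ i ∈ Finset.range k, (X ^ q) ^ i := by
  rcases Nat.eq_zero_or_pos q with rfl | hq
  · simp
  rcases Nat.eq_zero_or_pos k with rfl | hk0
  · simp
  have hproper : q ∈ (q * k).properDivisors :=
    Nat.mem_properDivisors.mpr ⟨dvd_mul_right q k, lt_mul_right hq (by omega)⟩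
  have h := X_pow_sub_one_mul_cyclotomic_dvd_X_pow_sub_one_of_dvd R hproper
  have hgeom :
      (∑ i ∈ Finset.range k, (X ^ q) ^ i) * (X ^ q - 1) = (X ^ (q * k) - 1 : R[X]) := by
    rw [geom_sum_mul, pow_mul]
  rw [← hgeom, mul_comm _ (X ^ q - 1)] at h
  have hmonic : (X ^ q - 1 : R[X]).Monic := by simpa using monic_X_pow_sub_C (1 : R) hq.ne'
  exact hmonic.isRegular.left.dvd_cancel_left.mp h

section CyclotomicRoots

variable {R A : Type*} [CommRing R] [CommRing A] [Algebra R A] {x : A}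

theorem pow_eq_one_of_aeval_cyclotomic_eq_zero {n : ℕ} (h : aeval x (cyclotomic n R) = 0) :
    x ^ n = 1 := by
  obtain ⟨c, hc⟩ := cyclotomic.dvd_X_pow_sub_one n R
  have := congrArg (aeval x) hc
  rwa [map_mul, h, zero_mul, map_sub, map_pow, aeval_X, map_one, sub_eq_zero] at this

theorem natCast_eq_zero_of_aeval_cyclotomic_mul_eq_zero {q k : ℕ} (hk : k ≠ 1) (hx : x ^ q = 1)
    (h : aeval x (cyclotomic (q * k) R) = 0) : (k : A) = 0 := by
  obtain ⟨c, hc⟩ := cyclotomic_mul_dvd_geom_sum_X_pow R (q := q) hk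
  have := congrArg (aeval x) hc
  simpa [hx, h] using this

theorem natCast_eq_zero_of_dvd_div_gcd {m n p : ℕ} (hm : aeval x (cyclotomic m R) = 0)
    (hn : aeval x (cyclotomic n R) = 0) (hp : p ≠ 1) (hdvd : p ∣ m / m.gcd n) :
    (p : A) = 0 := by
  obtain ⟨k, hk⟩ := hdvd
  have hxd : x ^ m.gcd n = 1 :=
    pow_gcd_eq_one.mpr ⟨pow_eq_one_of_aeval_cyclotomic_eq_zero hm,
      pow_eq_one_of_aeval_cyclotomic_eq_zero hn⟩
  have hm_eq : m.gcd n * k * p = m := by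
    rw [mul_assoc, mul_comm k, ← hk, Nat.mul_div_cancel' (Nat.gcd_dvd_left m n)]
  refine natCast_eq_zero_of_aeval_cyclotomic_mul_eq_zero (q := m.gcd n * k) hp ?_ (by rwa [hm_eq])
  rw [pow_mul, hxd, one_pow]

end CyclotomicRoots

theorem natCast_mem_span_cyclotomic_of_dvd_div_gcd {m n p : ℕ} (hp : p ≠ 1)
    (hdvd : p ∣ m / m.gcd n) :
    (p : ℤ[X]) ∈ Ideal.span {cyclotomic m ℤ, cyclotomic n ℤ} := by
  set I := Ideal.span {cyclotomic m ℤ, cyclotomic n ℤ}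
  set x := Ideal.Quotient.mkₐ ℤ I X
  have aeval_x (f : ℤ[X]) : aeval x f = Ideal.Quotient.mk I f := by
    rw [aeval_algHom_apply, aeval_X_left_apply, Ideal.Quotient.mkₐ_eq_mk]
  rw [← Ideal.Quotient.eq_zero_iff_mem, map_natCast]
  refine natCast_eq_zero_of_dvd_div_gcd (R := ℤ) (x := x) ?_ ?_ hp hdvd <;>
    rw [aeval_x, Ideal.Quotient.eq_zero_iff_mem] <;>
    exact Ideal.subset_span (by simp)

theorem stmt0_general (m n : ℕ) (p : ℕ) (hp : p.Prime)
    (hdvd : p ∣ m / Nat.gcd m n ∨ p ∣ n / Nat.gcd m n) :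
    (p : ℤ[X]) ∈ Ideal.span {cyclotomic m ℤ, cyclotomic n ℤ} := by
  rcases hdvd with h | h
  · exact natCast_mem_span_cyclotomic_of_dvd_div_gcd hp.one_lt.ne' h
  · rw [Set.pair_comm]
    exact natCast_mem_span_cyclotomic_of_dvd_div_gcd hp.one_lt.ne' (by rwa [Nat.gcd_comm])

/-- If a prime `p` divides `m / gcd(m,n)` or `n / gcd(m,n)`, then `p` lies in the ideal of
`ℤ[X]` generated by the cyclotomic polynomials `Φ_m` and `Φ_n`. -/
theorem stmt0 (m n : ℕ) (hm : 0 < m) (hn : 0 < n) (p : ℕ) (hp : p.Prime)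
    (hdvd : p ∣ m / Nat.gcd m n ∨ p ∣ n / Nat.gcd m n) :
    (p : ℤ[X]) ∈ Ideal.span {cyclotomic m ℤ, cyclotomic n ℤ} :=
  stmt0_general m n p hp hdvd
end

section
/- Let m and n be positive integers. Suppose there is no prime p and natural number α such that m = n·p^α or n = m·p^α (in particular m ≠ n). Then Φ_m(X) and Φ_n(X) generate the unit ideal of ℤ[X]; equivalently, the quotient ring ℤ[X]/(Φ_m(X), Φ_n(X)) is the zero ring. -/
/-!
If `Φ_m` and `Φ_n` generated a proper ideal, it would lie in a maximal ideal `M`, and the image of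
`X` in the field `ℤ[X] ⧸ M` would be a common root of both. In a domain of characteristic `p > 0`,
a root of `Φ_{p^a k}` with `p ∤ k` is exactly a primitive `k`-th root of unity, so the `p`-free
parts of `m` and `n` coincide; in characteristic zero a root of `Φ_m` is a primitive `m`-th root
of unity, so `m = n`.
-/

open Polynomial

theorem Polynomial.isRoot_map_quotient_mk_X {R : Type*} [CommRing R] {I : Ideal R[X]} {f : R[X]}
    (hf : f ∈ I) : (f.map (algebraMap R (R[X] ⧸ I))).IsRoot (Ideal.Quotient.mk I X) := by
  rw [IsRoot, eval_map_algebraMap, ← Ideal.Quotient.mkₐ_eq_mk R, aeval_algHom_apply, aeval_X_left,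
    AlgHom.id_apply, Ideal.Quotient.mkₐ_eq_mk, Ideal.Quotient.eq_zero_iff_mem]
  exact hf

theorem Nat.exists_eq_mul_pow_of_eq_pow_mul {p a b k m n : ℕ} (hm : m = p ^ a * k)
    (hn : n = p ^ b * k) : ∃ α, m = n * p ^ α ∨ n = m * p ^ α := by
  rcases le_total b a with hba | hab
  · exact ⟨a - b, .inl (by rw [hm, hn, mul_right_comm, ← pow_add, Nat.add_sub_cancel' hba])⟩
  · exact ⟨b - a, .inr (by rw [hm, hn, mul_right_comm, ← pow_add, Nat.add_sub_cancel' hab])⟩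

section
variable {R : Type*} [CommRing R] [IsDomain R] {m n : ℕ} {x : R}

theorem Polynomial.ne_zero_of_isRoot_cyclotomic (h : (cyclotomic n R).IsRoot x) : n ≠ 0 := by
  rintro rfl
  simp at h

theorem Polynomial.eq_of_isRoot_cyclotomic_of_charZero [CharZero R]
    (hm : (cyclotomic m R).IsRoot x) (hn : (cyclotomic n R).IsRoot x) : m = n :=
  ((isRoot_cyclotomic_iff_charZero (ne_zero_of_isRoot_cyclotomic hm).bot_lt).1 hm).unique
    ((isRoot_cyclotomic_iff_charZero (ne_zero_of_isRoot_cyclotomic hn).bot_lt).1 hn)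

theorem Polynomial.exists_eq_mul_pow_of_isRoot_cyclotomic_of_charP (p : ℕ) [Fact p.Prime]
    [CharP R p] (hm : (cyclotomic m R).IsRoot x) (hn : (cyclotomic n R).IsRoot x) :
    ∃ α, m = n * p ^ α ∨ n = m * p ^ α := by
  have hp : p.Prime := Fact.out
  have : NeZero (ordCompl[p] m : R) :=
    NeZero.of_not_dvd R (Nat.not_dvd_ordCompl hp (ne_zero_of_isRoot_cyclotomic hm))
  have : NeZero (ordCompl[p] n : R) :=
    NeZero.of_not_dvd R (Nat.not_dvd_ordCompl hp (ne_zero_of_isRoot_cyclotomic hn))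
  rw [← Nat.ordProj_mul_ordCompl_eq_self m p, isRoot_cyclotomic_prime_pow_mul_iff_of_charP] at hm
  rw [← Nat.ordProj_mul_ordCompl_eq_self n p, isRoot_cyclotomic_prime_pow_mul_iff_of_charP] at hn
  have hcompl : ordCompl[p] m = ordCompl[p] n := hm.unique hn
  exact Nat.exists_eq_mul_pow_of_eq_pow_mul (Nat.ordProj_mul_ordCompl_eq_self m p).symm
    (hcompl ▸ Nat.ordProj_mul_ordCompl_eq_self n p).symm

theorem Polynomial.exists_prime_eq_mul_pow_of_isRoot_cyclotomic
    (hm : (cyclotomic m R).IsRoot x) (hn : (cyclotomic n R).IsRoot x) :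
    ∃ p α : ℕ, p.Prime ∧ (m = n * p ^ α ∨ n = m * p ^ α) := by
  obtain ⟨p, hchar⟩ := CharP.exists R
  rcases CharP.char_is_prime_or_zero R p with hp | rfl
  · have : Fact p.Prime := ⟨hp⟩
    obtain ⟨α, hα⟩ := exists_eq_mul_pow_of_isRoot_cyclotomic_of_charP p hm hn
    exact ⟨p, α, hp, hα⟩
  · have : CharZero R := CharP.charP_to_charZero R
    exact ⟨2, 0, Nat.prime_two, .inl (by simp [eq_of_isRoot_cyclotomic_of_charZero hm hn])⟩

end

theorem stmt1_general (m n : ℕ)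
    (h : ¬ ∃ (p α : ℕ), p.Prime ∧ (m = n * p ^ α ∨ n = m * p ^ α)) :
    Ideal.span {cyclotomic m ℤ, cyclotomic n ℤ} = ⊤ := by
  by_contra hne
  obtain ⟨M, hM, hle⟩ := Ideal.exists_le_maximal _ hne
  have hroot (k : ℕ) (hk : cyclotomic k ℤ ∈ M) :
      (cyclotomic k (ℤ[X] ⧸ M)).IsRoot (Ideal.Quotient.mk M X) := by
    simpa only [map_cyclotomic] using isRoot_map_quotient_mk_X hk
  exact h (exists_prime_eq_mul_pow_of_isRoot_cyclotomic
    (hroot m (hle (Ideal.subset_span (by simp)))) (hroot n (hle (Ideal.subset_span (by simp)))))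

/-- If there is no prime `p` and `α : ℕ` with `m = n * p ^ α` or `n = m * p ^ α`, then
`Φ_m` and `Φ_n` generate the unit ideal of `ℤ[X]`. -/
theorem stmt1 (m n : ℕ) (hm : 0 < m) (hn : 0 < n)
    (h : ¬ ∃ (p α : ℕ), p.Prime ∧ (m = n * p ^ α ∨ n = m * p ^ α)) :
    Ideal.span {cyclotomic m ℤ, cyclotomic n ℤ} = ⊤ :=
  stmt1_general m n h
end

section
/- Let m be a positive integer, p a prime, and α ≥ 1. Then there is a ring isomorphism ℤ[X]/(Φ_m(X), Φ_{m·p^α}(X)) ≅ 𝔽_p[X]/(Φ_m(X)), where on the right Φ_m(X) denotes the m-th cyclotomic polynomial over 𝔽_p = ℤ/pℤ. -/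
open Polynomial

/-!
Let `n = m p^α` and `q = m p^(α-1)`. Since `q` is a proper divisor of `n`, `Φ_n` divides
`(X^n - 1)/(X^q - 1) = Σ_{i<p} X^(q i)`, and this sum is `≡ p` modulo `X^m - 1`, hence
modulo `Φ_m`; so `p ∈ (Φ_m, Φ_n)`. Conversely, in characteristic `p` one has `Φ_{kp} = Φ_k^p`
or `Φ_k^(p-1)`, so `Φ_m ∣ Φ_n` over `𝔽_p` and `Φ_n ∈ (Φ_m, p)`. Thus `(Φ_m, Φ_n) = (Φ_m, p)`, and
`ℤ[X]/(Φ_m, p) ≅ 𝔽_p[X]/(Φ_m)`.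
-/

theorem pow_sub_one_dvd_geom_sum_sub {R : Type*} [CommRing R] (x : R) {m q : ℕ} (h : m ∣ q)
    (k : ℕ) : x ^ m - 1 ∣ ∑ i ∈ Finset.range k, (x ^ q) ^ i - k := by
  have : ∑ i ∈ Finset.range k, (x ^ q) ^ i - k = ∑ i ∈ Finset.range k, (x ^ (q * i) - 1) := by
    simp [Finset.sum_sub_distrib, pow_mul]
  rw [this]
  exact Finset.dvd_sum fun i _ => dvd_pow_sub_one_of_dvd (h.mul_right i)

namespace Polynomial

variable {R : Type*}

theorem cyclotomic_dvd_cyclotomic_mul_prime [Ring R] (p : ℕ) [hp : Fact p.Prime] [CharP R p]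
    (m : ℕ) : cyclotomic m R ∣ cyclotomic (m * p) R := by
  by_cases h : p ∣ m
  · rw [cyclotomic_mul_prime_dvd_eq_pow R h]
    exact dvd_pow_self _ hp.out.ne_zero
  · rw [cyclotomic_mul_prime_eq_pow_of_not_dvd R h]
    exact dvd_pow_self _ (Nat.sub_ne_zero_of_lt hp.out.one_lt)

theorem cyclotomic_dvd_cyclotomic_mul_prime_pow [Ring R] (p : ℕ) [Fact p.Prime] [CharP R p]
    (m k : ℕ) : cyclotomic m R ∣ cyclotomic (m * p ^ k) R := by
  induction k with
  | zero => simp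
  | succ k ih =>
    rw [pow_succ, ← mul_assoc]
    exact ih.trans (cyclotomic_dvd_cyclotomic_mul_prime p _)

theorem cyclotomic_mul_dvd_geom_sum [CommRing R] [IsDomain R] {q k : ℕ} (hq : 0 < q)
    (hk : 1 < k) : cyclotomic (q * k) R ∣ ∑ i ∈ Finset.range k, (X ^ q) ^ i := by
  have hq_mem : q ∈ (q * k).properDivisors :=
    Nat.mem_properDivisors.2 ⟨dvd_mul_right q k, lt_mul_of_one_lt_right hq hk⟩
  have h := X_pow_sub_one_mul_cyclotomic_dvd_X_pow_sub_one_of_dvd R hq_mem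
  rw [pow_mul, ← geom_sum_mul (X ^ q) k, mul_comm _ (X ^ q - 1)] at h
  have hne : (X ^ q - 1 : R[X]) ≠ 0 := by simpa using X_pow_sub_C_ne_zero (R := R) hq 1
  exact (mul_dvd_mul_iff_left hne).1 h

theorem natCast_mem_span_cyclotomic_pair [CommRing R] [IsDomain R] {m q k : ℕ} (hq : 0 < q)
    (hmq : m ∣ q) (hk : 1 < k) :
    (k : R[X]) ∈ Ideal.span {cyclotomic m R, cyclotomic (q * k) R} := by
  obtain ⟨a, ha⟩ :=
    (cyclotomic.dvd_X_pow_sub_one m R).trans (pow_sub_one_dvd_geom_sum_sub X hmq k)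
  obtain ⟨b, hb⟩ := cyclotomic_mul_dvd_geom_sum (R := R) hq hk
  rw [Ideal.mem_span_pair]
  exact ⟨-a, b, by linear_combination ha - hb⟩

theorem ker_mk_comp_mapRingHom_intCast (n : ℕ) (f : ℤ[X]) :
    RingHom.ker ((Ideal.Quotient.mk (Ideal.span {f.map (Int.castRingHom (ZMod n))})).comp
      (mapRingHom (Int.castRingHom (ZMod n)))) = Ideal.span {f, (n : ℤ[X])} := by
  have hsurj := map_surjective (Int.castRingHom (ZMod n)) ZMod.intCast_surjective
  rw [← RingHom.comap_ker, Ideal.mk_ker, ← coe_mapRingHom, ← Set.image_singleton,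
    ← Ideal.map_span, Ideal.comap_map_of_surjective _ hsurj, ← RingHom.ker_eq_comap_bot,
    ker_mapRingHom, ZMod.ker_intCastRingHom, Ideal.map_span, Set.image_singleton,
    ← Ideal.span_union, Set.union_singleton, Set.pair_comm, map_natCast]

theorem mem_span_pair_natCast_iff {n : ℕ} {f g : ℤ[X]} :
    g ∈ Ideal.span {f, (n : ℤ[X])} ↔
      f.map (Int.castRingHom (ZMod n)) ∣ g.map (Int.castRingHom (ZMod n)) := by
  rw [← ker_mk_comp_mapRingHom_intCast, RingHom.mem_ker, RingHom.comp_apply,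
    Ideal.Quotient.eq_zero_iff_mem, Ideal.mem_span_singleton, coe_mapRingHom]

noncomputable def quotientSpanPairNatCastEquiv (f : ℤ[X]) (n : ℕ) :
    (ℤ[X] ⧸ Ideal.span {f, (n : ℤ[X])}) ≃+*
      ((ZMod n)[X] ⧸ Ideal.span {f.map (Int.castRingHom (ZMod n))}) :=
  (Ideal.quotEquivOfEq (ker_mk_comp_mapRingHom_intCast n f).symm).trans
    (RingHom.quotientKerEquivOfSurjective
      (Ideal.Quotient.mk_surjective.comp (map_surjective _ ZMod.intCast_surjective)))

end Polynomial

/-- For `m ≥ 1`, `p` prime and `α ≥ 1`, there is a ring isomorphism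
`ℤ[X]/(Φ_m, Φ_{m·p^α}) ≃ 𝔽_p[X]/(Φ_m)`. -/
theorem stmt2 (m : ℕ) (hm : 0 < m) (p : ℕ) (hp : p.Prime) (α : ℕ) (hα : 1 ≤ α) :
    Nonempty ((ℤ[X] ⧸ Ideal.span {cyclotomic m ℤ, cyclotomic (m * p ^ α) ℤ}) ≃+*
      ((ZMod p)[X] ⧸ Ideal.span {cyclotomic m (ZMod p)})) := by
  have : Fact p.Prime := ⟨hp⟩
  obtain ⟨β, rfl⟩ : ∃ β, α = β + 1 := ⟨α - 1, by omega⟩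
  have hp_mem : (p : ℤ[X]) ∈ Ideal.span {cyclotomic m ℤ, cyclotomic (m * p ^ (β + 1)) ℤ} := by
    rw [pow_succ, ← mul_assoc]
    exact natCast_mem_span_cyclotomic_pair (Nat.mul_pos hm (pow_pos hp.pos β)) (dvd_mul_right m _)
      hp.one_lt
  have hΦ_mem : cyclotomic (m * p ^ (β + 1)) ℤ ∈ Ideal.span {cyclotomic m ℤ, (p : ℤ[X])} := by
    rw [mem_span_pair_natCast_iff, map_cyclotomic, map_cyclotomic]
    exact cyclotomic_dvd_cyclotomic_mul_prime_pow p m (β + 1)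
  have hI : Ideal.span {cyclotomic m ℤ, cyclotomic (m * p ^ (β + 1)) ℤ} =
      Ideal.span {cyclotomic m ℤ, (p : ℤ[X])} := by
    apply le_antisymm <;> rw [Ideal.span_le, Set.insert_subset_iff, Set.singleton_subset_iff]
    · exact ⟨Ideal.subset_span (by simp), hΦ_mem⟩
    · exact ⟨Ideal.subset_span (by simp), hp_mem⟩
  exact ⟨(Ideal.quotEquivOfEq hI).trans ((quotientSpanPairNatCastEquiv _ p).trans
    (Ideal.quotEquivOfEq (by rw [map_cyclotomic])))⟩
end

section
/- Let R be a commutative ring, J a finite index set, and for each j ∈ J a finite set I_j; let x_{j,i} ∈ R be given for all j ∈ J and i ∈ I_j. Suppose that for every choice function c assigning to each j ∈ J an element c(j) ∈ I_j, the ideal of R generated by {x_{j,c(j)} : j ∈ J} is the unit ideal. Then the ideal of R generated by the products {∏_{i ∈ I_j} x_{j,i} : j ∈ J} is also the unit ideal. -/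
/-! A proper ideal containing every product `∏ i, x j i` lies in a maximal ideal `m`, which is
prime, so from each product one factor `x j (c j)` lies in `m`. The resulting choice function `c`
gives a family generating an ideal inside `m`, hence not the unit ideal. -/

namespace Ideal

theorem IsPrime.exists_choice_span_le_of_span_prod_le {R : Type*} [CommRing R] {J : Type*}
    {I : J → Type*} [∀ j, Fintype (I j)] {x : ∀ j, I j → R} {p : Ideal R} [p.IsPrime]
    (hp : span (Set.range fun j => ∏ i, x j i) ≤ p) :
    ∃ c : ∀ j, I j, span (Set.range fun j => x j (c j)) ≤ p := by
  have hfactor : ∀ j, ∃ i, x j i ∈ p := fun j => by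
    obtain ⟨i, -, hi⟩ := IsPrime.prod_mem_iff.mp (hp (subset_span ⟨j, rfl⟩))
    exact ⟨i, hi⟩
  choose c hc using hfactor
  refine ⟨c, span_le.mpr ?_⟩
  rintro _ ⟨j, rfl⟩
  exact hc j

end Ideal

theorem stmt5_general {R : Type*} [CommRing R] {J : Type*}
    {I : J → Type*} [∀ j, Fintype (I j)] (x : ∀ j, I j → R)
    (h : ∀ c : ∀ j, I j, Ideal.span (Set.range fun j => x j (c j)) = ⊤) :
    Ideal.span (Set.range fun j => ∏ i, x j i) = ⊤ := by
  by_contra hne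
  obtain ⟨m, hm, hle⟩ := Ideal.ne_top_iff_exists_maximal.mp hne
  obtain ⟨c, hc⟩ := hm.isPrime.exists_choice_span_le_of_span_prod_le hle
  exact hm.ne_top (top_le_iff.mp (h c ▸ hc))

/-- If for every choice function `c` the elements `x j (c j)` generate the unit ideal,
then the products `∏_{i ∈ I j} x j i` generate the unit ideal. -/
theorem stmt5 {R : Type*} [CommRing R] {J : Type*} [Fintype J]
    {I : J → Type*} [∀ j, Fintype (I j)] (x : ∀ j, I j → R)
    (h : ∀ c : ∀ j, I j, Ideal.span (Set.range fun j => x j (c j)) = ⊤) :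
    Ideal.span (Set.range fun j => ∏ i, x j i) = ⊤ :=
  stmt5_general x h
end

section
/- Let R be a commutative ring and let m, n be positive integers such that m/gcd(m, n) has at least two distinct prime factors. Then R[X]/(Φ_m(X)) is (X^n − 1)-torsion-free: multiplication by the class of X^n − 1 is injective on the quotient ring R[X]/(Φ_m(X)). -/
/-!
Let `x` be the class of `X` in `A = R[X]/(Φ_m, X^n - 1)` and `d = gcd(m, n)`, `k = m / d`.
Then `x^m = x^n = 1`, so `x^d = 1`. Since `Φ_{dk}` divides `Φ_k(X^d)`, we get `Φ_k(1) = 0` in `A`,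
while `Φ_k(1) = 1` because `k` is not a prime power. Hence `A = 0`, i.e. `X^n - 1` is a unit
modulo `Φ_m`.
-/

open Polynomial

lemma cyclotomic_mul_dvd_expand_cyclotomic {R : Type*} [CommRing R] (d k : ℕ) :
    cyclotomic (d * k) R ∣ expand R d (cyclotomic k R) := by
  induction d using Nat.recOnMul generalizing k with
  | zero => simp [cyclotomic_zero]
  | one => rw [one_mul, expand_one]
  | prime p hp =>
    by_cases hdvd : p ∣ k
    · rw [cyclotomic_expand_eq_cyclotomic hp hdvd, mul_comm]
    · rw [cyclotomic_expand_eq_cyclotomic_mul hp hdvd, mul_comm p k]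
      exact dvd_mul_right _ _
  | mul a b ha hb =>
    calc cyclotomic (a * b * k) R = cyclotomic (a * (b * k)) R := by rw [mul_assoc]
      _ ∣ expand R a (cyclotomic (b * k) R) := ha _
      _ ∣ expand R a (expand R b (cyclotomic k R)) := by
        obtain ⟨c, hc⟩ := hb k
        exact ⟨expand R a c, by rw [hc, map_mul]⟩
      _ = expand R (a * b) (cyclotomic k R) := expand_expand a b _

lemma eval_one_cyclotomic_of_two_le_card_primeFactors {R : Type*} [Ring R] {k : ℕ}
    (h : 2 ≤ k.primeFactors.card) : eval 1 (cyclotomic k R) = 1 := by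
  refine eval_one_cyclotomic_not_prime_pow fun {p} hp l hpl => ?_
  subst hpl
  rcases Nat.eq_zero_or_pos l with rfl | hl
  · simp at h
  · simp [Nat.primeFactors_prime_pow hl.ne' hp] at h

lemma subsingleton_of_isRoot_cyclotomic_of_pow_eq_one {A : Type*} [CommRing A] {m n : ℕ}
    {x : A} (hx : (cyclotomic m A).IsRoot x) (hxn : x ^ n = 1)
    (h : 2 ≤ (m / m.gcd n).primeFactors.card) : Subsingleton A := by
  have hxm : x ^ m = 1 := by
    simpa [sub_eq_zero] using hx.dvd (cyclotomic.dvd_X_pow_sub_one m A)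
  have hxd : x ^ m.gcd n = 1 := pow_gcd_eq_one.2 ⟨hxm, hxn⟩
  have hroot : (expand A (m.gcd n) (cyclotomic (m / m.gcd n) A)).IsRoot x := by
    refine hx.dvd ?_
    simpa [Nat.mul_div_cancel' (m.gcd_dvd_left n)] using
      cyclotomic_mul_dvd_expand_cyclotomic (R := A) (m.gcd n) (m / m.gcd n)
  rw [IsRoot.def, expand_eval, hxd, eval_one_cyclotomic_of_two_le_card_primeFactors h] at hroot
  exact subsingleton_of_zero_eq_one hroot.symm

lemma isUnit_mk_X_pow_sub_one_of_two_le_card_primeFactors {R : Type*} [CommRing R] {m n : ℕ}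
    (h : 2 ≤ (m / m.gcd n).primeFactors.card) :
    IsUnit (Ideal.Quotient.mk (Ideal.span {cyclotomic m R}) ((X : R[X]) ^ n - 1)) := by
  set I := Ideal.span {cyclotomic m R}
  set J := Ideal.span {Ideal.Quotient.mk I (X ^ n - 1)}
  rw [← Ideal.span_singleton_eq_top, ← Ideal.Quotient.subsingleton_iff]
  set φ : R[X] →+* (R[X] ⧸ I) ⧸ J := (Ideal.Quotient.mk J).comp (Ideal.Quotient.mk I)
  have hφΦ : φ (cyclotomic m R) = 0 := by
    rw [RingHom.comp_apply, Ideal.Quotient.eq_zero_iff_mem.2 (Ideal.mem_span_singleton_self _),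
      map_zero]
  have hφX : φ X ^ n = 1 := by
    have : φ (X ^ n - 1) = 0 := Ideal.Quotient.eq_zero_iff_mem.2 (Ideal.mem_span_singleton_self _)
    rwa [map_sub, map_pow, map_one, sub_eq_zero] at this
  refine subsingleton_of_isRoot_cyclotomic_of_pow_eq_one (x := φ X) ?_ hφX h
  rw [← map_cyclotomic m (φ.comp C), IsRoot.def, eval_map, ← hom_eval₂, eval₂_C_X, hφΦ]

theorem stmt6_general {R : Type*} [CommRing R] (m n : ℕ)
    (h : 2 ≤ (m / Nat.gcd m n).primeFactors.card) :
    Function.Injective (fun y : R[X] ⧸ Ideal.span {cyclotomic m R} =>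
      Ideal.Quotient.mk (Ideal.span {cyclotomic m R}) ((X : R[X]) ^ n - 1) * y) :=
  (isUnit_mk_X_pow_sub_one_of_two_le_card_primeFactors h).mul_right_injective

/-- If `m / gcd(m,n)` has at least two distinct prime factors, then multiplication by the class
of `X^n - 1` is injective on `R[X]/(Φ_m)`. -/
theorem stmt6 {R : Type*} [CommRing R] (m n : ℕ) (hm : 0 < m) (hn : 0 < n)
    (h : 2 ≤ (m / Nat.gcd m n).primeFactors.card) :
    Function.Injective (fun y : R[X] ⧸ Ideal.span {cyclotomic m R} =>
      Ideal.Quotient.mk (Ideal.span {cyclotomic m R}) ((X : R[X]) ^ n - 1) * y) :=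
  stmt6_general m n h
end

section
/- Let m and n be positive integers such that m/gcd(m, n) has at least two distinct prime factors. Then the ideal of ℤ[X] generated by Φ_m(X) and X^n − 1 is the unit ideal. -/
open Polynomial

/-- If `m / gcd(m,n)` has at least two distinct prime factors, then `Φ_m(X)` and `X^n - 1`
generate the unit ideal of `ℤ[X]`. -/
theorem stmt7 (m n : ℕ) (hm : 0 < m) (hn : 0 < n)
    (h : 2 ≤ (m / Nat.gcd m n).primeFactors.card) :
    Ideal.span {cyclotomic m ℤ, (X : ℤ[X]) ^ n - 1} = ⊤ := by
  set d := Nat.gcd m n with hd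
  set k := m / d with hk
  have hd0 : 0 < d := Nat.gcd_pos_of_pos_left n hm
  have hdm : d ∣ m := Nat.gcd_dvd_left m n
  have hdn : d ∣ n := Nat.gcd_dvd_right m n
  have hk0 : 0 < k := Nat.div_pos (Nat.le_of_dvd hm hdm) hd0
  have hkpp : ∀ {p : ℕ}, p.Prime → ∀ j : ℕ, p ^ j ≠ k := by
    intro p hp j hpj
    rcases Nat.eq_zero_or_pos j with rfl | hj
    · simp only [pow_zero] at hpj
      rw [← hpj] at h; simp at h
    · rw [← hpj, Nat.primeFactors_prime_pow hj.ne' hp] at h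
      simp at h
  -- the quotient ring A = ℤ[X]/(Φ_m)
  set I : Ideal ℤ[X] := Ideal.span {cyclotomic m ℤ} with hI
  have hirr : Irreducible (cyclotomic m ℤ) := cyclotomic.irreducible hm
  have hIp : I.IsPrime := (Ideal.span_singleton_prime hirr.ne_zero).mpr hirr.prime
  haveI := hIp
  set A := ℤ[X] ⧸ I
  set π : ℤ[X] →+* A := Ideal.Quotient.mk I with hπ
  have hmA : (m : A) ≠ 0 := by
    intro hzero
    have : ((m : ℤ[X]) : ℤ[X]) ∈ I := by
      rw [← Ideal.Quotient.eq_zero_iff_mem]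
      simpa using hzero
    rw [hI, Ideal.mem_span_singleton] at this
    have hdeg : (cyclotomic m ℤ).natDegree ≤ (m : ℤ[X]).natDegree :=
      Polynomial.natDegree_le_of_dvd this (by exact_mod_cast Nat.cast_ne_zero.mpr hm.ne')
    rw [natDegree_cyclotomic] at hdeg
    have : (m : ℤ[X]).natDegree = 0 := by
      simpa using Polynomial.natDegree_natCast m
    rw [this] at hdeg
    exact absurd (Nat.le_zero.mp hdeg) (Nat.totient_pos.mpr hm).ne'
  haveI : NeZero (m : A) := ⟨hmA⟩
  -- x := image of X is a primitive m-th root of unity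
  set x : A := π X with hx
  have hroot : IsRoot (cyclotomic m A) x := by
    have h1 : cyclotomic m A = map (Int.castRingHom A) (cyclotomic m ℤ) :=
      (map_cyclotomic_int m A).symm
    have h2 : aeval x (cyclotomic m ℤ) = 0 := by
      have h3 := aeval_algHom_apply (Ideal.Quotient.mkₐ ℤ I) (X : ℤ[X]) (cyclotomic m ℤ)
      rw [aeval_X_left_apply, Ideal.Quotient.mkₐ_eq_mk] at h3
      exact h3.trans (Ideal.Quotient.eq_zero_iff_mem.mpr (Ideal.subset_span rfl))
    rw [IsRoot, h1, eval_map]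
    rw [aeval_def] at h2
    exact (congrArg (fun f => eval₂ f x (cyclotomic m ℤ)) (RingHom.ext_int (Int.castRingHom A) (algebraMap ℤ A))).trans h2
  have hprim : IsPrimitiveRoot x m := (isRoot_cyclotomic_iff).mp hroot
  -- ξ := x^n is a primitive k-th root of unity
  have hmdk : m = d * k := (Nat.mul_div_cancel' hdm).symm
  have hxd : IsPrimitiveRoot (x ^ d) k := hprim.pow hm hmdk
  have hcop : (n / d).Coprime k := (Nat.coprime_div_gcd_div_gcd hd0).symm
  have hxn : IsPrimitiveRoot (x ^ n) k := by
    have : x ^ n = (x ^ d) ^ (n / d) := by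
      rw [← pow_mul, Nat.mul_div_cancel' hdn]
    rw [this]
    exact hxd.pow_of_coprime _ hcop
  -- 1 - x^n is a unit since Φ_k(1) = 1
  have hrootk : IsRoot (cyclotomic k A) (x ^ n) := hxn.isRoot_cyclotomic hk0
  obtain ⟨q, hq⟩ := (dvd_iff_isRoot).mpr hrootk
  have heval : (1 - x ^ n) * eval 1 q = 1 := by
    have := congrArg (eval 1) hq
    rw [eval_one_cyclotomic_not_prime_pow hkpp, eval_mul, eval_sub, eval_X, eval_C] at this
    linear_combination -this
  have hunit : IsUnit (x ^ n - 1) := by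
    have : (x ^ n - 1) * (-(eval 1 q)) = 1 := by linear_combination heval
    exact IsUnit.of_mul_eq_one _ this
  -- conclude
  obtain ⟨c, hc⟩ := hunit.exists_right_inv
  obtain ⟨g, rfl⟩ := Ideal.Quotient.mk_surjective c
  have hmem : g * ((X : ℤ[X]) ^ n - 1) - 1 ∈ I := by
    rw [← Ideal.Quotient.eq_zero_iff_mem]
    push_cast [map_mul, map_sub, map_pow, map_one]
    rw [mul_comm]
    simpa [hx] using sub_eq_zero_of_eq hc
  rw [hI, Ideal.mem_span_singleton] at hmem
  obtain ⟨t, ht⟩ := hmem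
  rw [Ideal.eq_top_iff_one, Ideal.mem_span_pair]
  exact ⟨-t, g, by linear_combination ht⟩
end

section
/- Let m and n be positive integers and p a prime such that m/gcd(m, n) = p^α for some α ≥ 1. Then p lies in the ideal of ℤ[X] generated by Φ_m(X) and X^n − 1. -/
open Polynomial

/-- If `m / gcd(m,n) = p ^ α` with `p` prime and `α ≥ 1`, then `p` lies in the ideal of `ℤ[X]`
generated by `Φ_m(X)` and `X^n - 1`. -/
theorem stmt8 (m n : ℕ) (hm : 0 < m) (hn : 0 < n) (p : ℕ) (hp : p.Prime) (α : ℕ)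
    (hα : 1 ≤ α) (h : m / Nat.gcd m n = p ^ α) :
    (p : ℤ[X]) ∈ Ideal.span {cyclotomic m ℤ, (X : ℤ[X]) ^ n - 1} := by
  set I : Ideal ℤ[X] := Ideal.span {cyclotomic m ℤ, (X : ℤ[X]) ^ n - 1} with hI
  set d := Nat.gcd m n with hd
  have hdm : d ∣ m := Nat.gcd_dvd_left m n
  have hmd : m = d * p ^ α := Nat.eq_mul_of_div_eq_right hdm h
  set q := d * p ^ (α - 1) with hq
  have hd0 : 0 < d := Nat.gcd_pos_of_pos_left n hm
  have hq0 : 0 < q := Nat.mul_pos hd0 (pow_pos hp.pos _)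
  have hqp : q * p = m := by
    rw [hmd, hq, mul_assoc, ← pow_succ, Nat.sub_add_cancel hα]
  have hqm : q ∣ m := ⟨p, hqp.symm⟩
  have hqlt : q < m := by
    rw [← hqp]
    exact lt_mul_of_one_lt_right hq0 hp.one_lt
  have hcyc : cyclotomic m ℤ ∈ I := Ideal.subset_span (by simp)
  have hXn : (X : ℤ[X]) ^ n - 1 ∈ I := Ideal.subset_span (by simp)
  have hXm : (X : ℤ[X]) ^ m - 1 ∈ I := by
    obtain ⟨c, hc⟩ := cyclotomic.dvd_X_pow_sub_one (R := ℤ) (n := m)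
    rw [hc]; exact Ideal.mul_mem_right _ _ hcyc
  -- divisibility : cyclotomic m * (X^q - 1) ∣ X^m - 1
  have hmq : ¬ m ∣ q := fun hmq => absurd (Nat.le_of_dvd hq0 hmq) (not_le.mpr hqlt)
  have hdvd : cyclotomic m ℤ * ((X : ℤ[X]) ^ q - 1) ∣ (X : ℤ[X]) ^ m - 1 := by
    have hnot : m ∉ q.divisors := fun hc => hmq (Nat.mem_divisors.mp hc).1
    have key : cyclotomic m ℤ * ((X : ℤ[X]) ^ q - 1)
        = ∏ i ∈ insert m q.divisors, cyclotomic i ℤ := by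
      rw [Finset.prod_insert hnot, prod_cyclotomic_eq_X_pow_sub_one hq0]
    rw [key, ← prod_cyclotomic_eq_X_pow_sub_one hm ℤ]
    refine Finset.prod_dvd_prod_of_subset _ _ _ ?_
    intro k hk
    simp only [Finset.mem_insert, Nat.mem_divisors] at hk ⊢
    rcases hk with rfl | ⟨hk, _⟩
    · exact ⟨dvd_refl _, hm.ne'⟩
    · exact ⟨hk.trans hqm, hm.ne'⟩
  set S : ℤ[X] := ∑ i ∈ Finset.range p, ((X : ℤ[X]) ^ q) ^ i with hS
  have hgeom : ((X : ℤ[X]) ^ q - 1) * S = (X : ℤ[X]) ^ m - 1 := by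
    rw [hS, mul_comm, geom_sum_mul, ← pow_mul, hqp]
  have hXq_ne : ((X : ℤ[X]) ^ q - 1) ≠ 0 := by
    have := monic_X_pow_sub_C (1 : ℤ) hq0.ne'
    rw [map_one] at this
    exact this.ne_zero
  have hSmem : S ∈ I := by
    obtain ⟨c, hc⟩ := hdvd
    have : ((X : ℤ[X]) ^ q - 1) * S = ((X : ℤ[X]) ^ q - 1) * (cyclotomic m ℤ * c) := by
      rw [hgeom, hc]; ring
    have hSeq : S = cyclotomic m ℤ * c := mul_left_cancel₀ hXq_ne this
    rw [hSeq]
    exact Ideal.mul_mem_right _ _ hcyc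
  -- now pass to the quotient
  rw [← Ideal.Quotient.eq_zero_iff_mem]
  set π := Ideal.Quotient.mk I with hπ
  have hx_m : (π X) ^ m = 1 := by
    have := Ideal.Quotient.eq_zero_iff_mem.mpr hXm
    rw [map_sub, map_pow, map_one, sub_eq_zero] at this
    exact this
  have hx_n : (π X) ^ n = 1 := by
    have := Ideal.Quotient.eq_zero_iff_mem.mpr hXn
    rw [map_sub, map_pow, map_one, sub_eq_zero] at this
    exact this
  have hx_d : (π X) ^ d = 1 :=
    orderOf_dvd_iff_pow_eq_one.mp
      (Nat.dvd_gcd (orderOf_dvd_of_pow_eq_one hx_m) (orderOf_dvd_of_pow_eq_one hx_n))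
  have hx_q : (π X) ^ q = 1 := by
    rw [hq, pow_mul, hx_d, one_pow]
  have hπS : π S = (p : ℤ[X] ⧸ I) := by
    rw [hS, map_sum]
    simp only [map_pow, hx_q, one_pow]
    simp
  have : π S = 0 := Ideal.Quotient.eq_zero_iff_mem.mpr hSmem
  rw [hπS] at this
  rw [map_natCast]
  exact this
end

section
/- Let R be a commutative ring, p a prime, and m, n positive integers such that m/gcd(m, n) is a power of p. Suppose R has bounded p^∞-torsion, i.e. there exists M ≥ 0 such that every r ∈ R with p^t·r = 0 for some t ≥ 0 satisfies p^M·r = 0. Then the quotient ring R[X]/(Φ_m(X)) has bounded (X^n − 1)^∞-torsion: there exists N ≥ 0 such that every element x of R[X]/(Φ_m(X)) with (X^n − 1)^t·x = 0 for some t ≥ 0 satisfies (X^n − 1)^N·x = 0. -/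
/-!
Put `q = m / gcd(m, n) = p ^ α` and `y = X ^ n` in `A = R[X]/(Φ_m)`. The `n`-th power of a
primitive `m`-th root of unity is a primitive `q`-th root of unity, so `Φ_m ∣ Φ_q(X ^ n)` and
`Φ_q(y) = 0`. As `Φ_q(1) = p` and `Φ_q ≡ (X - 1) ^ φ(q) mod p`, this gives
`y - 1 ∣ p ∣ (y - 1) ^ φ(q)` in `A`, so bounded `(y - 1)^∞`-torsion follows from bounded
`p^∞`-torsion of `A`, which `A` inherits from `R` because it is a free `R`-module.
-/

open Polynomial

def HasBoundedTorsion (R M : Type*) [CommSemiring R] [AddCommMonoid M] [Module R M] (c : R) :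
    Prop :=
  ∃ N : ℕ, ∀ x : M, (∃ t : ℕ, c ^ t • x = 0) → c ^ N • x = 0

namespace HasBoundedTorsion

variable {R M : Type*} [CommSemiring R] [AddCommMonoid M] [Module R M]

theorem zero : HasBoundedTorsion R M 0 :=
  ⟨1, fun x _ => by rw [pow_one, zero_smul]⟩

theorem of_dvd_of_dvd_pow {a c : R} {e : ℕ} (ha : HasBoundedTorsion R M a) (hca : c ∣ a)
    (hac : a ∣ c ^ e) : HasBoundedTorsion R M c := by
  obtain ⟨N, hN⟩ := ha
  obtain ⟨v, rfl⟩ := hca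
  obtain ⟨w, hw⟩ := hac
  refine ⟨e * N, fun x ⟨t, ht⟩ => ?_⟩
  have hax : (c * v) ^ N • x = 0 :=
    hN x ⟨t, by rw [mul_pow, mul_comm, mul_smul, ht, smul_zero]⟩
  rw [pow_mul, hw, mul_pow, mul_comm, mul_smul, hax, smul_zero]

theorem of_basis {ι : Type*} (b : Module.Basis ι R M) {c : R} (h : HasBoundedTorsion R R c) :
    HasBoundedTorsion R M c := by
  obtain ⟨N, hN⟩ := h
  refine ⟨N, fun x ⟨t, ht⟩ => b.repr.injective ?_⟩
  ext i
  have hi : c ^ t * b.repr x i = 0 := by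
    simpa using congrArg (fun y => b.repr y i) ht
  simpa using hN _ ⟨t, hi⟩

theorem algebraMap {A : Type*} [CommSemiring A] [Algebra R A] {c : R}
    (h : HasBoundedTorsion R A c) : HasBoundedTorsion A A (algebraMap R A c) := by
  simpa only [HasBoundedTorsion, Algebra.smul_def, map_pow, Algebra.algebraMap_self,
    RingHom.id_apply] using h

theorem adjoinRoot {R : Type*} [CommRing R] {f : R[X]} (hf : f.Monic) {c : R}
    (h : HasBoundedTorsion R R c) :
    HasBoundedTorsion (AdjoinRoot f) (AdjoinRoot f) (Algebra.algebraMap R (AdjoinRoot f) c) :=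
  (h.of_basis (AdjoinRoot.powerBasis' hf).basis).algebraMap

end HasBoundedTorsion

theorem cyclotomic_prime_pow_succ_zmod (p k : ℕ) [Fact p.Prime] :
    cyclotomic (p ^ (k + 1)) (ZMod p) = (X - 1) ^ (p ^ (k + 1) - p ^ k) := by
  simpa using cyclotomic_mul_prime_pow_eq (ZMod p) (m := 1) (Fact.out : p.Prime).not_dvd_one
    k.succ_pos

theorem C_dvd_X_sub_one_pow_sub_cyclotomic_prime_pow (p k : ℕ) [Fact p.Prime] :
    C (p : ℤ) ∣ (X - 1) ^ (p ^ (k + 1) - p ^ k) - cyclotomic (p ^ (k + 1)) ℤ := by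
  have hker : (X - 1) ^ (p ^ (k + 1) - p ^ k) - cyclotomic (p ^ (k + 1)) ℤ ∈
      RingHom.ker (mapRingHom (Int.castRingHom (ZMod p))) := by
    simp [cyclotomic_prime_pow_succ_zmod]
  rwa [ker_mapRingHom, ZMod.ker_intCastRingHom, Ideal.map_span, Set.image_singleton,
    Ideal.mem_span_singleton] at hker

section IsRootCyclotomic

variable {S : Type*} [CommRing S] {p k : ℕ} [Fact p.Prime] {y : S}

theorem sub_one_dvd_of_isRoot_cyclotomic_prime_pow
    (hy : (cyclotomic (p ^ (k + 1)) S).IsRoot y) : y - 1 ∣ (p : S) := by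
  have := sub_dvd_eval_sub y 1 (cyclotomic (p ^ (k + 1)) S)
  rwa [hy.eq_zero, eval_one_cyclotomic_prime_pow, zero_sub, dvd_neg] at this

theorem natCast_dvd_sub_one_pow_of_isRoot_cyclotomic_prime_pow
    (hy : (cyclotomic (p ^ (k + 1)) S).IsRoot y) :
    (p : S) ∣ (y - 1) ^ (p ^ (k + 1) - p ^ k) := by
  have := map_dvd (aeval y) (C_dvd_X_sub_one_pow_sub_cyclotomic_prime_pow p k)
  simpa [aeval_def, eval₂_eq_eval_map, hy.eq_zero] using this

end IsRootCyclotomic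

theorem HasBoundedTorsion.sub_one_of_isRoot_cyclotomic_prime_pow {S M : Type*} [CommRing S]
    [AddCommGroup M] [Module S M] {p k : ℕ} (hp : p.Prime) {y : S}
    (hy : (cyclotomic (p ^ k) S).IsRoot y) (h : HasBoundedTorsion S M p) :
    HasBoundedTorsion S M (y - 1) := by
  have := Fact.mk hp
  cases k with
  | zero =>
    rw [pow_zero, cyclotomic_one, IsRoot, eval_sub, eval_X, eval_one] at hy
    rw [hy]
    exact .zero
  | succ k =>
    exact h.of_dvd_of_dvd_pow (sub_one_dvd_of_isRoot_cyclotomic_prime_pow hy)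
      (natCast_dvd_sub_one_pow_of_isRoot_cyclotomic_prime_pow hy)

theorem cyclotomic_dvd_cyclotomic_comp_X_pow (R : Type*) [CommRing R] {m : ℕ} (hm : 0 < m)
    (n : ℕ) : cyclotomic m R ∣ (cyclotomic (m / m.gcd n) R).comp (X ^ n) := by
  suffices h : cyclotomic m ℤ ∣ (cyclotomic (m / m.gcd n) ℤ).comp (X ^ n) by
    simpa [map_comp] using Polynomial.map_dvd (Int.castRingHom R) h
  have hζ := Complex.isPrimitiveRoot_exp m hm.ne'
  set ζ := Complex.exp (2 * Real.pi * Complex.I / m)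
  have hd : 0 < m.gcd n := Nat.gcd_pos_of_pos_left n hm
  have hq : 0 < m / m.gcd n := Nat.div_pos (Nat.gcd_le_left n hm) hd
  have hζn : IsPrimitiveRoot (ζ ^ n) (m / m.gcd n) := by
    have hζd := hζ.pow hm (Nat.mul_div_cancel' (Nat.gcd_dvd_left m n)).symm
    have := hζd.pow_of_coprime _ (Nat.coprime_div_gcd_div_gcd hd).symm
    rwa [← pow_mul, Nat.mul_div_cancel' (Nat.gcd_dvd_right m n)] at this
  rw [cyclotomic_eq_minpoly hζ hm]
  refine minpoly.isIntegrallyClosed_dvd (hζ.isIntegral hm) ?_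
  rw [aeval_comp, aeval_X_pow, aeval_def, eval₂_eq_eval_map, map_cyclotomic]
  exact (hζn.isRoot_cyclotomic hq).eq_zero

theorem stmt9_general {R : Type*} [CommRing R] (p : ℕ) (hp : p.Prime) (m n : ℕ) (hm : 0 < m)
    (α : ℕ) (h : m / Nat.gcd m n = p ^ α)
    (hR : ∃ M : ℕ, ∀ r : R, (∃ t : ℕ, (p : R) ^ t * r = 0) → (p : R) ^ M * r = 0) :
    ∃ N : ℕ, ∀ x : R[X] ⧸ Ideal.span {cyclotomic m R},
      (∃ t : ℕ,
        (Ideal.Quotient.mk (Ideal.span {cyclotomic m R}) ((X : R[X]) ^ n - 1)) ^ t * x = 0) →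
      (Ideal.Quotient.mk (Ideal.span {cyclotomic m R}) ((X : R[X]) ^ n - 1)) ^ N * x = 0 := by
  set Φ := cyclotomic m R
  have hroot : (cyclotomic (p ^ α) (AdjoinRoot Φ)).IsRoot (AdjoinRoot.root Φ ^ n) := by
    have hdvd := cyclotomic_dvd_cyclotomic_comp_X_pow R hm n
    rwa [h, ← AdjoinRoot.mk_eq_zero, ← AdjoinRoot.aeval_eq, aeval_comp, aeval_X_pow, aeval_def,
      eval₂_eq_eval_map, map_cyclotomic] at hdvd
  have hpA : HasBoundedTorsion (AdjoinRoot Φ) (AdjoinRoot Φ) (p : AdjoinRoot Φ) := by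
    simpa only [map_natCast] using
      HasBoundedTorsion.adjoinRoot (c := (p : R)) (cyclotomic.monic m R) hR
  have hX : AdjoinRoot.mk Φ (X ^ n - 1) = AdjoinRoot.root Φ ^ n - 1 := by
    rw [map_sub, map_pow, AdjoinRoot.mk_X, map_one]
  have hc := hpA.sub_one_of_isRoot_cyclotomic_prime_pow hp hroot
  rwa [← hX] at hc

/-- If `m / gcd(m,n)` is a power of the prime `p` and `R` has bounded `p^∞`-torsion, then
`R[X]/(Φ_m)` has bounded `(X^n - 1)^∞`-torsion. -/
theorem stmt9 {R : Type*} [CommRing R] (p : ℕ) (hp : p.Prime) (m n : ℕ) (hm : 0 < m)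
    (hn : 0 < n) (α : ℕ) (h : m / Nat.gcd m n = p ^ α)
    (hR : ∃ M : ℕ, ∀ r : R, (∃ t : ℕ, (p : R) ^ t * r = 0) → (p : R) ^ M * r = 0) :
    ∃ N : ℕ, ∀ x : R[X] ⧸ Ideal.span {cyclotomic m R},
      (∃ t : ℕ,
        (Ideal.Quotient.mk (Ideal.span {cyclotomic m R}) ((X : R[X]) ^ n - 1)) ^ t * x = 0) →
      (Ideal.Quotient.mk (Ideal.span {cyclotomic m R}) ((X : R[X]) ^ n - 1)) ^ N * x = 0 :=
  stmt9_general p hp m n hm α h hR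
end

section
/- Let R be a commutative ring, p a prime, α ≥ 1, and n a positive integer; set m = n·p^α. Then in the quotient ring R[X]/(Φ_m(X)), the radical of the ideal generated by p equals the radical of the ideal generated by the class of X^n − 1. -/
/-!
Write `x` for the class of `X` in `R[X]/(Φ_m)` and `d = m / p`, a multiple of `n`. Since `Φ_m`
divides `(X^m - 1)/(X^d - 1) = ∑_{i<p} X^{di}`, we get `∑_{i<p} x^{di} = 0`, and reducing modulo
`x^n - 1` (which divides every `x^{di} - 1`) leaves `p`. Conversely `x^m = 1`, and
`(x^n - 1)^{p^α} ≡ x^m - 1 = 0` modulo `p`.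
-/

open Polynomial

namespace Polynomial

theorem cyclotomic_mul_dvd_geom_sum_X_pow (R : Type*) [CommRing R] (d : ℕ) {k : ℕ} (hk : 1 < k) :
    cyclotomic (d * k) R ∣ ∑ i ∈ Finset.range k, (X ^ d : R[X]) ^ i := by
  rcases d.eq_zero_or_pos with rfl | hd
  · simp
  have hdk : d ∈ (d * k).properDivisors :=
    Nat.mem_properDivisors.mpr ⟨dvd_mul_right d k, lt_mul_right hd hk⟩
  obtain ⟨c, hc⟩ := X_pow_sub_one_mul_cyclotomic_dvd_X_pow_sub_one_of_dvd R hdk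
  refine ⟨c, (monic_X_pow_sub_C (1 : R) hd.ne').isRegular.right ?_⟩
  simp only [map_one]
  rw [geom_sum_mul, ← pow_mul, hc]
  ring

end Polynomial

theorem sub_one_dvd_natCast_of_geom_sum_eq_zero {S : Type*} [CommRing S] {y : S} {k : ℕ}
    (h : ∑ i ∈ Finset.range k, y ^ i = 0) : y - 1 ∣ (k : S) := by
  have : (k : S) = -∑ i ∈ Finset.range k, (y ^ i - 1) := by
    rw [Finset.sum_sub_distrib, h]
    simp
  rw [this, dvd_neg]
  exact Finset.dvd_sum fun i _ => sub_one_dvd_pow_sub_one y i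

theorem natCast_dvd_sub_one_pow_prime_pow_sub {S : Type*} [CommRing S] {p : ℕ} (hp : p.Prime)
    (a : S) (k : ℕ) : (p : S) ∣ (a - 1) ^ p ^ k - (a ^ p ^ k - 1) := by
  obtain ⟨r, hr⟩ := exists_add_pow_prime_pow_eq hp a (-1) k
  -- expanding `(1 + -1) ^ p ^ k = 0` gives `(-1) ^ p ^ k ≡ -1 [p]`, also for `p = 2`
  obtain ⟨s, hs⟩ := exists_add_pow_prime_pow_eq hp (1 : S) (-1) k
  rw [add_neg_cancel, zero_pow (pow_ne_zero k hp.ne_zero)] at hs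
  exact ⟨s - a * r, by linear_combination hr - hs⟩

theorem Ideal.radical_span_natCast_eq_radical_span_pow_sub_one {S : Type*} [CommRing S]
    {p : ℕ} (hp : p.Prime) {n d k : ℕ} (hnd : n ∣ d) {x : S}
    (hsum : ∑ i ∈ Finset.range p, (x ^ d) ^ i = 0) (hroot : x ^ (n * p ^ k) = 1) :
    (Ideal.span {(p : S)}).radical = (Ideal.span {x ^ n - 1}).radical := by
  apply le_antisymm <;>
    rw [Ideal.radical_le_radical_iff, Ideal.span_le, Set.singleton_subset_iff]
  · refine Ideal.le_radical (Ideal.mem_span_singleton.mpr ?_)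
    exact (dvd_pow_sub_one_of_dvd hnd).trans (sub_one_dvd_natCast_of_geom_sum_eq_zero hsum)
  · refine ⟨p ^ k, Ideal.mem_span_singleton.mpr ?_⟩
    have := natCast_dvd_sub_one_pow_prime_pow_sub hp (x ^ n) k
    rwa [← pow_mul, hroot, sub_self, sub_zero] at this

theorem stmt10_general {R : Type*} [CommRing R] (p : ℕ) (hp : p.Prime) (α : ℕ) (hα : 1 ≤ α)
    (n : ℕ) :
    (Ideal.span {(p : R[X] ⧸ Ideal.span {cyclotomic (n * p ^ α) R})}).radical =
      (Ideal.span {Ideal.Quotient.mk (Ideal.span {cyclotomic (n * p ^ α) R})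
        ((X : R[X]) ^ n - 1)}).radical := by
  set mk := Ideal.Quotient.mk (Ideal.span {cyclotomic (n * p ^ α) R})
  have hm : n * p ^ (α - 1) * p = n * p ^ α := by
    rw [mul_assoc, ← pow_succ, Nat.sub_add_cancel hα]
  have hroot : mk X ^ (n * p ^ α) = 1 := by
    rw [← sub_eq_zero, ← map_pow, ← map_one mk, ← map_sub, Ideal.Quotient.eq_zero_iff_dvd]
    exact cyclotomic.dvd_X_pow_sub_one _ R
  have hsum : ∑ i ∈ Finset.range p, (mk X ^ (n * p ^ (α - 1))) ^ i = 0 := by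
    simp only [← map_pow, ← map_sum, Ideal.Quotient.eq_zero_iff_dvd, mk]
    rw [← hm]
    exact cyclotomic_mul_dvd_geom_sum_X_pow R _ hp.one_lt
  rw [map_sub, map_pow, map_one]
  exact Ideal.radical_span_natCast_eq_radical_span_pow_sub_one hp (dvd_mul_right n _) hsum hroot

/-- For `m = n * p ^ α` with `p` prime and `α ≥ 1`, in `R[X]/(Φ_m)` the radical of the ideal
generated by `p` equals the radical of the ideal generated by the class of `X^n - 1`. -/
theorem stmt10 {R : Type*} [CommRing R] (p : ℕ) (hp : p.Prime) (α : ℕ) (hα : 1 ≤ α)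
    (n : ℕ) (hn : 0 < n) :
    (Ideal.span {(p : R[X] ⧸ Ideal.span {cyclotomic (n * p ^ α) R})}).radical =
      (Ideal.span {Ideal.Quotient.mk (Ideal.span {cyclotomic (n * p ^ α) R})
        ((X : R[X]) ^ n - 1)}).radical :=
  stmt10_general p hp α hα n
end

section
/- Let R be a commutative ring and m a positive integer whose image in R is a unit. Then the canonical ring homomorphism R[X]/(X^m − 1) → ∏_{d ∣ m} R[X]/(Φ_d(X)), induced by the quotient projections and indexed by the positive divisors d of m, is an isomorphism of rings. -/
/-!
Since `m` is a unit, `X ^ m - 1` is separable, so its factors `Φ_d`, `d ∣ m`, in the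
factorisation `X ^ m - 1 = ∏_{d ∣ m} Φ_d` are pairwise coprime, and the Chinese remainder
theorem for the principal ideals `(Φ_d)` gives the isomorphism.
-/

open Polynomial

open scoped Function

namespace Ideal

variable {R ι : Type*} [CommRing R] [Fintype ι]

noncomputable def quotientSpanProdEquivPi (f : ι → R) (hf : Pairwise (IsCoprime on f)) :
    R ⧸ span {∏ i, f i} ≃+* ∀ i, R ⧸ span {f i} :=
  (quotEquivOfEq (iInf_span_singleton fun _ _ hij => hf hij).symm).trans
    (quotientInfRingEquivPiQuotient _ fun _ _ hij =>
      (isCoprime_span_singleton_iff _ _).mpr (hf hij))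

@[simp]
theorem quotientSpanProdEquivPi_mk (f : ι → R) (hf : Pairwise (IsCoprime on f)) (x : R)
    (i : ι) :
    quotientSpanProdEquivPi f hf (Quotient.mk _ x) i = Quotient.mk _ x :=
  rfl

end Ideal

namespace Polynomial

variable {R : Type*} [CommRing R]

theorem separable_X_pow_sub_one {m : ℕ} (hm : IsUnit (m : R)) :
    ((X : R[X]) ^ m - 1).Separable := by
  simpa using separable_X_pow_sub_C_unit (1 : Rˣ) hm

theorem pairwise_isCoprime_of_separable_prod {ι : Type*} [Fintype ι] {f : ι → R[X]}
    (hf : (∏ i, f i).Separable) : Pairwise (IsCoprime on f) := by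
  classical
  intro i j hij
  have hdvd : f i * f j ∣ ∏ k, f k := by
    rw [← Finset.prod_pair hij]
    exact Finset.prod_dvd_prod_of_subset _ _ _ (Finset.subset_univ _)
  exact (hf.of_dvd hdvd).isCoprime

end Polynomial

/-- If `m` is invertible in `R`, then the canonical ring homomorphism
`R[X]/(X^m - 1) → ∏_{d ∣ m} R[X]/(Φ_d)` (induced by the quotient projections) is an
isomorphism. -/
theorem stmt13 {R : Type*} [CommRing R] (m : ℕ) (hm : 0 < m) (hu : IsUnit (m : R)) :
    ∃ e : (R[X] ⧸ Ideal.span {(X : R[X]) ^ m - 1}) ≃+*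
        ((d : m.divisors) → R[X] ⧸ Ideal.span {cyclotomic (d : ℕ) R}),
      ∀ (f : R[X]) (d : m.divisors),
        e (Ideal.Quotient.mk (Ideal.span {(X : R[X]) ^ m - 1}) f) d =
          Ideal.Quotient.mk (Ideal.span {cyclotomic (d : ℕ) R}) f := by
  have hprod : ∏ d : m.divisors, cyclotomic (d : ℕ) R = X ^ m - 1 := by
    rw [Finset.prod_coe_sort m.divisors (cyclotomic · R)]
    exact prod_cyclotomic_eq_X_pow_sub_one hm R
  have hcoprime : Pairwise (IsCoprime on fun d : m.divisors => cyclotomic (d : ℕ) R) :=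
    pairwise_isCoprime_of_separable_prod (hprod ▸ separable_X_pow_sub_one hu)
  exact ⟨(Ideal.quotEquivOfEq (by rw [hprod])).trans (Ideal.quotientSpanProdEquivPi _ hcoprime),
    fun f d => Ideal.quotientSpanProdEquivPi_mk _ hcoprime f d⟩
end

section
/- Let p be a prime and let S be a commutative ring which is p-torsion-free (multiplication by p is injective on S) and p-adically separated (⋂_{k≥1} p^k·S = 0), and such that S/pS is reduced. Let φ : S → S be a ring homomorphism satisfying φ(x) ≡ x^p (mod pS) for all x ∈ S. Then φ is injective. -/
/-- If `S` is `p`-torsion-free, `p`-adically separated and `S/pS` is reduced, then any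
Frobenius lift `φ : S → S` (i.e. `φ x ≡ x^p mod p`) is injective. -/
theorem stmt15 {S : Type*} [CommRing S] (p : ℕ) (hp : p.Prime)
    (htf : ∀ x : S, (p : S) * x = 0 → x = 0)
    (hsep : ∀ x : S, (∀ k : ℕ, 1 ≤ k → ∃ y : S, x = (p : S) ^ k * y) → x = 0)
    (hred : IsReduced (S ⧸ Ideal.span {(p : S)}))
    (φ : S →+* S) (hφ : ∀ x : S, φ x - x ^ p ∈ Ideal.span {(p : S)}) :
    Function.Injective φ := by
  -- iterated torsion-freeness
  have htfk : ∀ (k : ℕ) (z : S), (p : S) ^ k * z = 0 → z = 0 := by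
    intro k
    induction k with
    | zero => intro z hz; simpa using hz
    | succ n ih =>
      intro z hz
      exact ih z (htf ((p : S) ^ n * z) (by linear_combination hz))
  -- kernel is contained in pS
  have hker : ∀ y : S, φ y = 0 → ∃ z : S, y = (p : S) * z := by
    intro y hy
    have h1 : y ^ p ∈ Ideal.span {(p : S)} := by
      have := hφ y
      rw [hy, zero_sub] at this
      simpa using (neg_mem this : -(-(y ^ p)) ∈ Ideal.span {(p : S)})
    have h2 : (Ideal.Quotient.mk (Ideal.span {(p : S)}) y) ^ p = 0 := by
      rw [← map_pow, Ideal.Quotient.eq_zero_iff_mem]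
      exact h1
    have h3 : (Ideal.Quotient.mk (Ideal.span {(p : S)}) y) = 0 :=
      IsReduced.eq_zero _ ⟨p, h2⟩
    rw [Ideal.Quotient.eq_zero_iff_mem, Ideal.mem_span_singleton] at h3
    exact h3
  rw [injective_iff_map_eq_zero]
  intro x hx
  apply hsep
  intro k hk
  clear hk
  induction k with
  | zero => exact ⟨x, by simp⟩
  | succ n ih =>
    obtain ⟨y, hy⟩ := ih
    have hφy : φ y = 0 := by
      apply htfk n
      rw [hy, map_mul, map_pow, map_natCast] at hx
      exact hx
    obtain ⟨z, hz⟩ := hker y hφy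
    exact ⟨z, by rw [hy, hz, pow_succ, mul_assoc]⟩
end

section
/- Let A be a commutative noetherian ring, M a finitely generated A-module, I₁, …, I_r ideals of A and f₁, …, f_s elements of A such that every prime ideal 𝔭 of A either contains some I_j or fails to contain some f_k. If x ∈ M satisfies x ∈ ⋂_{t≥0} I_j^t·M for every j = 1, …, r, and for every k = 1, …, s there exists t ≥ 0 with f_k^t·x = 0, then x = 0. (Equivalently, the natural map from M to the product of the I_j-adic completions of M and the localizations M[1/f_k] is injective.) -/
section Aux

universe u v

/-- Universe-polymorphic version of the forward direction of
`Ideal.mem_iInf_smul_pow_eq_bot_iff` (which is stated only for `R M : Type u`). -/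
lemma aux_krull {A : Type u} [CommRing A] [IsNoetherianRing A]
    {M : Type v} [AddCommGroup M] [Module A M] [Module.Finite A M]
    (J : Ideal A) (x : M) (h : ∀ t : ℕ, x ∈ J ^ t • (⊤ : Submodule A M)) :
    ∃ a ∈ J, a • x = x := by
  let e : ULift.{v} A ≃+* A := ULift.ringEquiv
  haveI : IsNoetherianRing (ULift.{v} A) := isNoetherianRing_of_ringEquiv A e.symm
  haveI : Module.Finite A (ULift.{u} M) :=
    Module.Finite.equiv (ULift.moduleEquiv (R := A) (M := M)).symm
  haveI : IsScalarTower A (ULift.{v} A) (ULift.{u} M) := by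
    constructor
    intro a c m
    apply ULift.down_injective
    show (a • c).down • m.down = a • (c.down • m.down)
    rw [smul_smul]
    congr 1
  haveI : Module.Finite (ULift.{v} A) (ULift.{u} M) :=
    Module.Finite.of_restrictScalars_finite A _ _
  set J' : Ideal (ULift.{v} A) := J.map (e.symm : A →+* ULift.{v} A) with hJ'
  have hx' : ULift.up x ∈ (⨅ i : ℕ, J' ^ i • ⊤ : Submodule (ULift.{v} A) (ULift.{u} M)) := by
    rw [Submodule.mem_iInf]
    intro t
    refine Submodule.smul_induction_on (h t) (fun a ha m _ => ?_) (fun y z hy hz => ?_)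
    · have h1 : (ULift.up (a • m) : ULift.{u} M) = (ULift.up a : ULift.{v} A) • ULift.up m := rfl
      have h2 : (ULift.up a : ULift.{v} A) ∈ J' ^ t := by
        rw [hJ', ← Ideal.map_pow]
        exact Ideal.mem_map_of_mem _ ha
      rw [h1]
      exact Submodule.smul_mem_smul h2 Submodule.mem_top
    · have : (ULift.up (y + z) : ULift.{u} M) = ULift.up y + ULift.up z := rfl
      rw [this]
      exact Submodule.add_mem _ hy hz
  obtain ⟨a', ha'⟩ := (Ideal.mem_iInf_smul_pow_eq_bot_iff J' (ULift.up x)).mp hx'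
  refine ⟨(a' : ULift.{v} A).down, ?_, ?_⟩
  · have h1 : (a' : ULift.{v} A).down ∈ J'.map (e : ULift.{v} A →+* A) :=
      Ideal.mem_map_of_mem _ a'.prop
    have hcomp : (e : ULift.{v} A →+* A).comp (e.symm : A →+* ULift.{v} A) = RingHom.id A := by
      ext a; simp
    simp only [hJ', Ideal.map_map, hcomp, Ideal.map_id] at h1
    exact h1
  · have := congrArg ULift.down ha'
    exact this
end Aux

/-- Joint injectivity of completions and localizations: if every prime ideal of the
noetherian ring `A` contains some `I j` or misses some `f k`, and `x` lies in all
`(I j)^t • M` and is killed by a power of each `f k`, then `x = 0`. -/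
theorem stmt16 {A : Type*} [CommRing A] [IsNoetherianRing A]
    {M : Type*} [AddCommGroup M] [Module A M] [Module.Finite A M]
    (r s : ℕ) (I : Fin r → Ideal A) (f : Fin s → A)
    (hcover : ∀ 𝔭 : Ideal A, 𝔭.IsPrime → (∃ j, I j ≤ 𝔭) ∨ (∃ k, f k ∉ 𝔭))
    (x : M)
    (hI : ∀ j, ∀ t : ℕ, x ∈ (I j ^ t) • (⊤ : Submodule A M))
    (hf : ∀ k, ∃ t : ℕ, f k ^ t • x = 0) :
    x = 0 := by
  by_contra hx
  have htop : Ideal.torsionOf A M x ≠ ⊤ := by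
    simp only [ne_eq, Ideal.torsionOf_eq_top_iff]; exact hx
  obtain ⟨𝔭, h𝔭max, h𝔭⟩ := Ideal.exists_le_maximal _ htop
  rcases hcover 𝔭 h𝔭max.isPrime with ⟨j, hj⟩ | ⟨k, hk⟩
  · obtain ⟨a, haJ, ha⟩ := aux_krull (I j) x (hI j)
    have h1 : (1 - a) • x = 0 := by
      rw [sub_smul, one_smul, ha, sub_self]
    have h1mem : (1 : A) - a ∈ 𝔭 := h𝔭 ((Ideal.mem_torsionOf_iff x _).mpr h1)
    have hamem : a ∈ 𝔭 := hj haJ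
    have hone : (1 : A) ∈ 𝔭 := by
      have := 𝔭.add_mem h1mem hamem
      simpa using this
    exact h𝔭max.ne_top (Ideal.eq_top_of_isUnit_mem _ hone isUnit_one)
  · obtain ⟨t, ht⟩ := hf k
    have : f k ^ t ∈ 𝔭 := h𝔭 ((Ideal.mem_torsionOf_iff x _).mpr ht)
    exact hk (h𝔭max.isPrime.mem_of_pow_mem t this)
end
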